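/- For every ε>0, the set S := { f : f = Σ_{i=1}^n λ_i m_i is a finite linear combination of ε-molecules m_i with ‖f‖_{H¹_{ε,mol}} ≥ (1/10) Σ_{i=1}^n |λ_i| } is dense in H¹_{ε,mol} for the H¹_{ε,mol}-norm. The same statement holds with H¹_{ε,mol} replaced by H¹_ato and ε-molecules replaced by atoms. -/

import Mathlib

/-!
Abstract Hardy spaces via atomic/molecular decompositions, after
"Abstract Hardy spaces" (Bernicot–Zhao style construction).

`(X, d, μ)` is a space of homogeneous type, `B = (B_Q)_Q` is a family of
`L²`-bounded linear operators indexed by balls (center `c`, radius `r`).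
-/

noncomputable section

/-- A linearization of `T`: a Banach space `E` and a bounded linear
`U : L² → L²(X, E)` with `|T f (x)| = ‖U f (x)‖` a.e. -/
structure AbstractHardy.Linearization {X : Type*} [MetricSpace X] [MeasurableSpace X]
    (μ : MeasureTheory.Measure X) (T : (X → ℝ) → X → ℝ) where
  E : Type
  [grp : NormedAddCommGroup E]
  [mod : NormedSpace ℝ E]
  [comp : CompleteSpace E]
  U : (X → ℝ) → X → E
  linear : IsLinearMap ℝ U
  bounded : ∃ C : ENNReal, C ≠ ⊤ ∧ ∀ f, MeasureTheory.MemLp f 2 μ →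
    MeasureTheory.eLpNorm (U f) 2 μ ≤ C * MeasureTheory.eLpNorm f 2 μ
  realizes : ∀ f, MeasureTheory.MemLp f 2 μ → ∀ᵐ x ∂μ, |T f x| = ‖U f x‖

open MeasureTheory Metric Filter ENNReal

namespace AbstractHardy

variable {X : Type*} [MetricSpace X] [MeasurableSpace X]

/-- The scaled corona `S_i(Q)` around the ball `Q = ball c r`:
`S_0(Q) = Q` and for `i ≥ 1`, `S_i(Q) = {x : 2^i ≤ 1 + d(x,c)/r < 2^(i+1)}`. -/
def corona (c : X) (r : ℝ) (i : ℕ) : Set X :=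
  if i = 0 then Metric.ball c r
  else {x | (2 : ℝ) ^ i ≤ 1 + dist x c / r ∧ 1 + dist x c / r < (2 : ℝ) ^ (i + 1)}

/-- The doubling property with constants `A`, `δ`:
`μ(B(x,tr)) ≤ A t^δ μ(B(x,r))` for every `t ≥ 1`. -/
def Doubling (μ : Measure X) (A δ : ℝ) : Prop :=
  ∀ (x : X) (r t : ℝ), 0 < r → 1 ≤ t →
    μ (Metric.ball x (t * r)) ≤ ENNReal.ofReal (A * t ^ δ) * μ (Metric.ball x r)

/-- The family `(B_Q)_Q` consists of linear operators. -/
def LinearFamily (B : X → ℝ → (X → ℝ) → X → ℝ) : Prop :=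
  ∀ (c : X) (r : ℝ), IsLinearMap ℝ (B c r)

/-- The family `(B_Q)_Q` is uniformly `L²`-bounded with constant `A'`. -/
def UniformBound (μ : Measure X) (B : X → ℝ → (X → ℝ) → X → ℝ) (A' : ℝ) : Prop :=
  ∀ (c : X) (r : ℝ) (f : X → ℝ), 0 < r → MemLp f 2 μ →
    eLpNorm (B c r f) 2 μ ≤ ENNReal.ofReal A' * eLpNorm f 2 μ

/-- `Bstar` is the family of adjoints of `B` for the real `L²` pairing
`⟨f, g⟩ = ∫ f g dμ`. -/
def IsAdjointFamily (μ : Measure X) (B Bstar : X → ℝ → (X → ℝ) → X → ℝ) : Prop :=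
  ∀ (c : X) (r : ℝ) (f g : X → ℝ), 0 < r → MemLp f 2 μ → MemLp g 2 μ →
    ∫ x, B c r f x * g x ∂μ = ∫ x, f x * Bstar c r g x ∂μ

/-- `Tstar` is the adjoint of `T` for the real `L²` pairing. -/
def IsAdjointOp (μ : Measure X) (T Tstar : (X → ℝ) → X → ℝ) : Prop :=
  ∀ (f g : X → ℝ), MemLp f 2 μ → MemLp g 2 μ →
    ∫ x, T f x * g x ∂μ = ∫ x, f x * Tstar g x ∂μ

/-- `((μ D)⁻¹ ∫_S |g|^p dμ)^{1/p}`, i.e. the `L^p(S)` norm normalized by `μ(D)^{-1/p}`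
(with the obvious `essSup` interpretation when `p = ∞`). -/
def scaledNorm (μ : Measure X) (p : ℝ≥0∞) (D S : Set X) (g : X → ℝ) : ℝ≥0∞ :=
  μ D ^ (-(p.toReal)⁻¹) * eLpNorm g p (μ.restrict S)

/-- An atom associated to some ball `Q = ball c r`: `m = B_Q f` with
`supp f ⊆ Q` and `‖f‖_{L²} ≤ μ(Q)^{-1/2}`. -/
def IsAtom (μ : Measure X) (B : X → ℝ → (X → ℝ) → X → ℝ) (m : X → ℝ) : Prop :=
  ∃ (c : X) (r : ℝ) (f : X → ℝ), 0 < r ∧ m = B c r f ∧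
    Function.support f ⊆ Metric.ball c r ∧
    eLpNorm f 2 μ ≤ μ (Metric.ball c r) ^ (-(1 : ℝ) / 2)

/-- An `ε`-molecule associated to some ball `Q = ball c r`: `m = B_Q f` with
`‖f‖_{L²(S_i(Q))} ≤ μ(2^i Q)^{-1/2} 2^{-ε i}` for all `i ≥ 0`. -/
def IsMolecule (μ : Measure X) (B : X → ℝ → (X → ℝ) → X → ℝ) (ε : ℝ) (m : X → ℝ) : Prop :=
  ∃ (c : X) (r : ℝ) (f : X → ℝ), 0 < r ∧ m = B c r f ∧
    ∀ i : ℕ, eLpNorm f 2 (μ.restrict (corona c r i)) ≤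
      μ (Metric.ball c ((2 : ℝ) ^ i * r)) ^ (-(1 : ℝ) / 2) *
        ENNReal.ofReal ((2 : ℝ) ^ (-(ε * (i : ℝ))))

/-- A decomposition `h = ∑ λ_i m_i` (μ-a.e.) with building blocks satisfying `P`
and `∑ |λ_i| < ∞`. -/
def IsDecomp (μ : Measure X) (P : (X → ℝ) → Prop) (h : X → ℝ)
    (lam : ℕ → ℝ) (m : ℕ → X → ℝ) : Prop :=
  (∀ i, P (m i)) ∧ Summable (fun i => |lam i|) ∧
    ∀ᵐ x ∂μ, HasSum (fun i => lam i * m i x) (h x)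

/-- Membership in the abstract Hardy space built from blocks satisfying `P`. -/
def MemHardy (μ : Measure X) (P : (X → ℝ) → Prop) (h : X → ℝ) : Prop :=
  ∃ lam m, IsDecomp μ P h lam m

/-- The Hardy norm: the infimum of `∑ |λ_i|` over all admissible decompositions. -/
def hardyNorm (μ : Measure X) (P : (X → ℝ) → Prop) (h : X → ℝ) : ℝ≥0∞ :=
  sInf {t : ℝ≥0∞ | ∃ lam m, IsDecomp μ P h lam m ∧ t = ENNReal.ofReal (∑' i, |lam i|)}

/-- Sublinearity (stated `μ`-a.e.). -/
def Sublinear (μ : Measure X) (T : (X → ℝ) → X → ℝ) : Prop :=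
  (∀ f g : X → ℝ, ∀ᵐ x ∂μ, |T (f + g) x| ≤ |T f x| + |T g x|) ∧
    ∀ (a : ℝ) (f : X → ℝ), ∀ᵐ x ∂μ, |T (a • f) x| = |a| * |T f x|

/-- The `L² → L²` operator (quasi-)norm of `T`. -/
def opNorm2 (μ : Measure X) (T : (X → ℝ) → X → ℝ) : ℝ≥0∞ :=
  sInf {C : ℝ≥0∞ | ∀ f, MemLp f 2 μ → eLpNorm (T f) 2 μ ≤ C * eLpNorm f 2 μ}

/-- The `H¹_ato → L¹` operator (quasi-)norm of `T`. -/
def opNormH1ato (μ : Measure X) (B : X → ℝ → (X → ℝ) → X → ℝ)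
    (T : (X → ℝ) → X → ℝ) : ℝ≥0∞ :=
  sInf {C : ℝ≥0∞ | ∀ f, MemLp f 2 μ → MemHardy μ (IsAtom μ B) f →
    eLpNorm (T f) 1 μ ≤ C * hardyNorm μ (IsAtom μ B) f}

/-- The Hardy–Littlewood maximal operator
`M_{HL,p}(f)(x) = sup_{Q ∋ x} ((μ Q)⁻¹ ∫_Q |f|^p)^{1/p}`. -/
def maxHL (μ : Measure X) (p : ℝ≥0∞) (f : X → ℝ) (x : X) : ℝ≥0∞ :=
  ⨆ (c : X) (r : ℝ) (_ : 0 < r) (_ : x ∈ Metric.ball c r),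
    scaledNorm μ p (Metric.ball c r) (Metric.ball c r) f

/-- The sharp maximal function
`M^♯_p(f)(x) = sup_{Q ∋ x} ((μ Q)⁻¹ ∫_Q |B_Q^* f|^p)^{1/p}`. -/
def sharpMax (μ : Measure X) (Bstar : X → ℝ → (X → ℝ) → X → ℝ) (p : ℝ≥0∞)
    (f : X → ℝ) (x : X) : ℝ≥0∞ :=
  ⨆ (c : X) (r : ℝ) (_ : 0 < r) (_ : x ∈ Metric.ball c r),
    scaledNorm μ p (Metric.ball c r) (Metric.ball c r) (Bstar c r f)

/-- The maximal operator `M_σ(f)(x) = sup_{Q ∋ x} ((μ Q)⁻¹ ∫_Q |A_Q^* f|^σ)^{1/σ}`,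
where `A_Q^* = Id - B_Q^*`. -/
def maxA (μ : Measure X) (Bstar : X → ℝ → (X → ℝ) → X → ℝ) (σ : ℝ≥0∞)
    (f : X → ℝ) (x : X) : ℝ≥0∞ :=
  ⨆ (c : X) (r : ℝ) (_ : 0 < r) (_ : x ∈ Metric.ball c r),
    scaledNorm μ σ (Metric.ball c r) (Metric.ball c r) (fun y => f y - Bstar c r f y)

/-- `T` is linearizable. -/
def Linearizable (μ : Measure X) (T : (X → ℝ) → X → ℝ) : Prop :=
  Nonempty (Linearization μ T)

open Classical in
/-- `1` if `μ(X) < ∞`, `0` otherwise. -/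
def finiteFlag (μ : Measure X) : ℝ≥0∞ := if μ Set.univ < ⊤ then 1 else 0

/-- Dual norm of `f` as a functional, through the `L²` pairing, on elements of
`L² ∩ H¹` of Hardy norm at most one. -/
def dualNorm (μ : Measure X) (P : (X → ℝ) → Prop) (f : X → ℝ) : ℝ≥0∞ :=
  ⨆ (h : X → ℝ) (_ : MemLp h 2 μ) (_ : MemHardy μ P h) (_ : hardyNorm μ P h ≤ 1),
    ENNReal.ofReal |∫ x, f x * h x ∂μ|

/-- The `BMO`-type norm `sup_Q ((μ Q)⁻¹ ∫_Q |B_Q^* f|²)^{1/2}`. -/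
def bmoNorm (μ : Measure X) (Bstar : X → ℝ → (X → ℝ) → X → ℝ) (f : X → ℝ) : ℝ≥0∞ :=
  ⨆ (c : X) (r : ℝ) (_ : 0 < r),
    scaledNorm μ 2 (Metric.ball c r) (Metric.ball c r) (Bstar c r f)

/-- The weighted measure `ω dμ`. -/
def weighted (μ : Measure X) (ω : X → ℝ) : Measure X :=
  μ.withDensity fun x => ENNReal.ofReal (ω x)

/-- The Muckenhoupt class `𝔸_p`. -/
def MuckenhouptAp (μ : Measure X) (ω : X → ℝ) (p : ℝ) : Prop :=
  ∃ C : ℝ≥0∞, C ≠ ⊤ ∧ ∀ (c : X) (r : ℝ), 0 < r →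
    ((μ (Metric.ball c r))⁻¹ * ∫⁻ x in Metric.ball c r, ENNReal.ofReal (ω x) ∂μ) *
      ((μ (Metric.ball c r))⁻¹ *
        ∫⁻ x in Metric.ball c r, ENNReal.ofReal (ω x) ^ (-(1 / (p - 1))) ∂μ) ^ (p - 1) ≤ C

/-- The reverse Hölder class `RH_q`. -/
def ReverseHolder (μ : Measure X) (ω : X → ℝ) (q : ℝ) : Prop :=
  ∃ C : ℝ≥0∞, C ≠ ⊤ ∧ ∀ (c : X) (r : ℝ), 0 < r →
    ((μ (Metric.ball c r))⁻¹ * ∫⁻ x in Metric.ball c r, ENNReal.ofReal (ω x) ^ q ∂μ) ^ (1 / q)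
      ≤ C * ((μ (Metric.ball c r))⁻¹ * ∫⁻ x in Metric.ball c r, ENNReal.ofReal (ω x) ∂μ)

/-- The conjugate exponent `a' = a/(a-1)` of a real exponent `a`. -/
def rconj (a : ℝ) : ℝ := a / (a - 1)

/-- `L^q` norm of an `ℝ≥0∞`-valued function (for finite `q`). -/
def lqNormE (μ : Measure X) (q : ℝ≥0∞) (g : X → ℝ≥0∞) : ℝ≥0∞ :=
  (∫⁻ x, g x ^ q.toReal ∂μ) ^ (q.toReal)⁻¹

/-- Weak `L^q` quasinorm `sup_t t · μ{g > t}^{1/q}` of an `ℝ≥0∞`-valued function. -/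
def weakLqNorm (μ : Measure X) (q : ℝ) (g : X → ℝ≥0∞) : ℝ≥0∞ :=
  ⨆ t : ℝ≥0∞, t * μ {x | t < g x} ^ q⁻¹

/-- Completeness of the abstract Hardy space built on blocks `P`: every Cauchy
sequence (for the Hardy norm) converges in Hardy norm to an element of the space. -/
def CompleteHardy (μ : Measure X) (P : (X → ℝ) → Prop) : Prop :=
  ∀ h : ℕ → X → ℝ, (∀ n, MemHardy μ P (h n)) →
    (∀ η : ℝ, 0 < η → ∃ N : ℕ, ∀ m n : ℕ, N ≤ m → N ≤ n →
      hardyNorm μ P (fun x => h m x - h n x) < ENNReal.ofReal η) →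
    ∃ g : X → ℝ, MemHardy μ P g ∧
      Filter.Tendsto (fun n => hardyNorm μ P (fun x => h n x - g x)) Filter.atTop (nhds 0)

/-!
Take a decomposition of `h` whose coefficient sum exceeds `‖h‖` only slightly, and cut it
off where its tail is small. The tail is a decomposition of the remainder, so the partial sum
`F` is close to `h`; by the triangle inequality `‖F‖` is then nearly `‖h‖`, while the
coefficients of `F` sum to at most those of the whole decomposition. Hence `F` lies in `S`
(with any constant `C > 1` in place of `10`).
-/

section

variable {Ω : Type*} [MeasurableSpace Ω] {μ : Measure Ω} {P : (Ω → ℝ) → Prop}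

theorem hardyNorm_le_of_isDecomp {h : Ω → ℝ} {lam : ℕ → ℝ} {m : ℕ → Ω → ℝ}
    (hd : IsDecomp μ P h lam m) : hardyNorm μ P h ≤ ENNReal.ofReal (∑' i, |lam i|) :=
  sInf_le ⟨lam, m, hd, rfl⟩

theorem exists_isDecomp_of_hardyNorm_lt {h : Ω → ℝ} {b : ℝ≥0∞} (hb : hardyNorm μ P h < b) :
    ∃ lam m, IsDecomp μ P h lam m ∧ ENNReal.ofReal (∑' i, |lam i|) < b := by
  obtain ⟨_, ⟨lam, m, hd, rfl⟩, hlt⟩ := sInf_lt_iff.mp hb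
  exact ⟨lam, m, hd, hlt⟩

theorem MemHardy.hardyNorm_ne_top {h : Ω → ℝ} (hh : MemHardy μ P h) : hardyNorm μ P h ≠ ⊤ :=
  let ⟨_, _, hd⟩ := hh
  ne_top_of_le_ne_top ENNReal.ofReal_ne_top (hardyNorm_le_of_isDecomp hd)

theorem IsDecomp.add {u v : Ω → ℝ} {lu lv : ℕ → ℝ} {mu mv : ℕ → Ω → ℝ}
    (hu : IsDecomp μ P u lu mu) (hv : IsDecomp μ P v lv mv) :
    IsDecomp μ P (u + v) (Sum.elim lu lv ∘ Equiv.natSumNatEquivNat.symm)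
      (Sum.elim mu mv ∘ Equiv.natSumNatEquivNat.symm) := by
  refine ⟨fun i => ?_, ?_, ?_⟩
  · simp only [Function.comp_apply]
    cases Equiv.natSumNatEquivNat.symm i
    exacts [hu.1 _, hv.1 _]
  · exact (Equiv.natSumNatEquivNat.symm.summable_iff (f := fun s => |Sum.elim lu lv s|)).mpr
      (Summable.sum _ hu.2.1 hv.2.1)
  · filter_upwards [hu.2.2, hv.2.2] with x hux hvx
    exact (Equiv.natSumNatEquivNat.symm.hasSum_iff
      (f := fun s => Sum.elim lu lv s * Sum.elim mu mv s x)).mpr (HasSum.sum hux hvx)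

theorem tsum_abs_sumElim_comp_natSumNatEquivNat_symm {lu lv : ℕ → ℝ}
    (hu : Summable fun i => |lu i|) (hv : Summable fun i => |lv i|) :
    ∑' i, |(Sum.elim lu lv ∘ Equiv.natSumNatEquivNat.symm) i| =
      ∑' i, |lu i| + ∑' i, |lv i| :=
  (Equiv.natSumNatEquivNat.symm.tsum_eq fun s => |Sum.elim lu lv s|).trans
    (Summable.tsum_sum (f := fun s => |Sum.elim lu lv s|) hu hv)

theorem hardyNorm_add_le (u v : Ω → ℝ) :
    hardyNorm μ P (u + v) ≤ hardyNorm μ P u + hardyNorm μ P v := by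
  unfold hardyNorm
  rw [ENNReal.sInf_add]
  refine le_iInf₂ fun _ ⟨lu, mu, hu, hlu⟩ => ?_
  rw [ENNReal.add_sInf]
  refine le_iInf₂ fun _ ⟨lv, mv, hv, hlv⟩ => ?_
  calc hardyNorm μ P (u + v)
      ≤ ENNReal.ofReal (∑' i, |(Sum.elim lu lv ∘ Equiv.natSumNatEquivNat.symm) i|) :=
        hardyNorm_le_of_isDecomp (hu.add hv)
    _ = _ := by
      rw [tsum_abs_sumElim_comp_natSumNatEquivNat_symm hu.2.1 hv.2.1,
        ENNReal.ofReal_add (tsum_nonneg fun _ => abs_nonneg _)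
          (tsum_nonneg fun _ => abs_nonneg _), hlu, hlv]

theorem hardyNorm_sub_hardyNorm_sub_le (u v : Ω → ℝ) :
    hardyNorm μ P u - hardyNorm μ P (u - v) ≤ hardyNorm μ P v :=
  tsub_le_iff_left.mpr (by simpa using hardyNorm_add_le (μ := μ) (P := P) (u - v) v)

theorem IsDecomp.sub_sum_range {h : Ω → ℝ} {lam : ℕ → ℝ} {m : ℕ → Ω → ℝ}
    (hd : IsDecomp μ P h lam m) (N : ℕ) :
    IsDecomp μ P (fun x => h x - ∑ i ∈ Finset.range N, lam i * m i x)
      (fun i => lam (i + N)) (fun i => m (i + N)) := by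
  refine ⟨fun i => hd.1 _, (summable_nat_add_iff N).mpr hd.2.1, ?_⟩
  filter_upwards [hd.2.2] with x hx
  exact (hasSum_nat_add_iff' N).mpr hx

theorem MemHardy.exists_finite_sum_approx {h : Ω → ℝ} (hh : MemHardy μ P h) {C : ℝ} (hC : 1 < C)
    {η : ℝ} (hη : 0 < η) :
    ∃ (n : ℕ) (lam : Fin n → ℝ) (m : Fin n → Ω → ℝ), (∀ i, P (m i)) ∧
      ENNReal.ofReal (∑ i, |lam i|) ≤
        ENNReal.ofReal C * hardyNorm μ P (fun x => ∑ i, lam i * m i x) ∧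
      hardyNorm μ P (fun x => h x - ∑ i, lam i * m i x) < ENNReal.ofReal η := by
  obtain ⟨α, hα0, hα⟩ : ∃ α : ℝ, 0 ≤ α ∧ hardyNorm μ P h = ENNReal.ofReal α :=
    ⟨_, ENNReal.toReal_nonneg, (ENNReal.ofReal_toReal hh.hardyNorm_ne_top).symm⟩
  rcases hα0.eq_or_lt with rfl | hαpos
  · exact ⟨0, Fin.elim0, Fin.elim0, fun i => i.elim0, by simp, by simpa [hα] using hη⟩
  obtain ⟨ρ, hρ, hρC⟩ : ∃ ρ > 0, α + ρ ≤ C * (α - ρ) :=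
    ⟨(C - 1) * α / (C + 1), by have := sub_pos.mpr hC; positivity, by
      field_simp; nlinarith⟩
  obtain ⟨lam, m, hd, hsum⟩ := exists_isDecomp_of_hardyNorm_lt
    (hα ▸ (ENNReal.ofReal_lt_ofReal_iff (by linarith)).mpr (lt_add_of_pos_right α hρ))
  obtain ⟨N, hN⟩ :=
    ((tendsto_sum_nat_add fun i => |lam i|).eventually_lt_const (lt_min hρ hη)).exists
  set τ := ∑' i, |lam (i + N)|
  set F := fun x => ∑ i ∈ Finset.range N, lam i * m i x
  have hF_fin (x : Ω) : ∑ i : Fin N, lam i * m i x = F x :=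
    Fin.sum_univ_eq_sum_range (fun i => lam i * m i x) N
  have htail : hardyNorm μ P (h - F) ≤ ENNReal.ofReal τ :=
    hardyNorm_le_of_isDecomp (hd.sub_sum_range N)
  refine ⟨N, fun i => lam i, fun i => m i, fun i => hd.1 i, ?_, ?_⟩
  · have hsum_range : ∑ i ∈ Finset.range N, |lam i| ≤ C * (α - τ) := by
      have := hd.2.1.sum_le_tsum (Finset.range N) fun i _ => abs_nonneg (lam i)
      have := (ENNReal.ofReal_lt_ofReal_iff (by linarith)).mp hsum
      nlinarith [lt_min_iff.mp hN]
    calc ENNReal.ofReal (∑ i : Fin N, |lam i|)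
        ≤ ENNReal.ofReal C * ENNReal.ofReal (α - τ) := by
          rw [Fin.sum_univ_eq_sum_range (fun i => |lam i|), ← ENNReal.ofReal_mul (by linarith)]
          exact ENNReal.ofReal_le_ofReal hsum_range
      _ = ENNReal.ofReal C * (hardyNorm μ P h - ENNReal.ofReal τ) := by
          rw [hα, ENNReal.ofReal_sub _ (tsum_nonneg fun _ => abs_nonneg _)]
      _ ≤ ENNReal.ofReal C * (hardyNorm μ P h - hardyNorm μ P (h - F)) := by gcongr
      _ ≤ _ := by simp only [hF_fin]; gcongr; exact hardyNorm_sub_hardyNorm_sub_le h F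
  · simp only [hF_fin]
    exact htail.trans_lt ((ENNReal.ofReal_lt_ofReal_iff hη).mpr (lt_min_iff.mp hN).2)

end

theorem statement3_general
    {X : Type*} [MetricSpace X] [MeasurableSpace X]
    (μ : Measure X)
    (B : X → ℝ → (X → ℝ) → X → ℝ)
 :
    (∀ ε : ℝ, 0 < ε → ∀ h : X → ℝ, MemHardy μ (IsMolecule μ B ε) h →
      ∀ η : ℝ, 0 < η → ∃ (n : ℕ) (lam : Fin n → ℝ) (m : Fin n → X → ℝ),
        (∀ i, IsMolecule μ B ε (m i)) ∧
        ENNReal.ofReal (∑ i, |lam i|) ≤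
          10 * hardyNorm μ (IsMolecule μ B ε) (fun x => ∑ i, lam i * m i x) ∧
        hardyNorm μ (IsMolecule μ B ε) (fun x => h x - ∑ i, lam i * m i x) <
          ENNReal.ofReal η) ∧
    (∀ h : X → ℝ, MemHardy μ (IsAtom μ B) h →
      ∀ η : ℝ, 0 < η → ∃ (n : ℕ) (lam : Fin n → ℝ) (m : Fin n → X → ℝ),
        (∀ i, IsAtom μ B (m i)) ∧
        ENNReal.ofReal (∑ i, |lam i|) ≤
          10 * hardyNorm μ (IsAtom μ B) (fun x => ∑ i, lam i * m i x) ∧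
        hardyNorm μ (IsAtom μ B) (fun x => h x - ∑ i, lam i * m i x) <
          ENNReal.ofReal η) := by
  have h10 : ENNReal.ofReal 10 = 10 := by norm_num
  refine ⟨fun ε _ h hh η hη => ?_, fun h hh η hη => ?_⟩ <;>
    simpa only [h10] using hh.exists_finite_sum_approx (by norm_num : (1 : ℝ) < 10) hη

/-- Lemma `lemdense2` of the paper: the set `S` of finite combinations
`f = ∑_{i<n} λ_i m_i` of molecules (resp. atoms) with `‖f‖ ≥ (1/10) ∑ |λ_i|` is dense in
`H¹_{ε,mol}` (resp. in `H¹_ato`). -/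
theorem statement3
    {X : Type*} [MetricSpace X] [MeasurableSpace X] [BorelSpace X]
    (μ : Measure X) (A δ A' : ℝ) (hA : 0 < A) (hδ : 0 < δ) (hA' : 0 < A')
    (hμ : Doubling μ A δ)
    (B : X → ℝ → (X → ℝ) → X → ℝ)
    (hBlin : LinearFamily B) (hBbd : UniformBound μ B A')
 :
    (∀ ε : ℝ, 0 < ε → ∀ h : X → ℝ, MemHardy μ (IsMolecule μ B ε) h →
      ∀ η : ℝ, 0 < η → ∃ (n : ℕ) (lam : Fin n → ℝ) (m : Fin n → X → ℝ),
        (∀ i, IsMolecule μ B ε (m i)) ∧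
        ENNReal.ofReal (∑ i, |lam i|) ≤
          10 * hardyNorm μ (IsMolecule μ B ε) (fun x => ∑ i, lam i * m i x) ∧
        hardyNorm μ (IsMolecule μ B ε) (fun x => h x - ∑ i, lam i * m i x) <
          ENNReal.ofReal η) ∧
    (∀ h : X → ℝ, MemHardy μ (IsAtom μ B) h →
      ∀ η : ℝ, 0 < η → ∃ (n : ℕ) (lam : Fin n → ℝ) (m : Fin n → X → ℝ),
        (∀ i, IsAtom μ B (m i)) ∧
        ENNReal.ofReal (∑ i, |lam i|) ≤
          10 * hardyNorm μ (IsAtom μ B) (fun x => ∑ i, lam i * m i x) ∧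
        hardyNorm μ (IsAtom μ B) (fun x => h x - ∑ i, lam i * m i x) <
          ENNReal.ofReal η) :=
  statement3_general μ B

end AbstractHardy
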